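/- For any finite set P of n ≥ 3 points in general position in the plane, the chromatic number of the disjointness graph D(P) is at most n − 2. -/

import Mathlib

open scoped Classical

/-- The closed segment associated to an unordered pair of points. -/
noncomputable def seg : Sym2 (ℝ × ℝ) → Set (ℝ × ℝ) :=
  Sym2.lift ⟨fun p q => segment ℝ p q, fun p q => segment_symm ℝ p q⟩

lemma seg_nonempty (s : Sym2 (ℝ × ℝ)) : (seg s).Nonempty := by
  induction s using Sym2.ind with
  | _ p q => exact ⟨p, by simp [seg, left_mem_segment]⟩

/-- A point set is in general position if no three (distinct) of its points are collinear. -/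
def GenPos (P : Set (ℝ × ℝ)) : Prop :=
  ∀ a ∈ P, ∀ b ∈ P, ∀ c ∈ P, a ≠ b → a ≠ c → b ≠ c →
    ¬ Collinear ℝ ({a, b, c} : Set (ℝ × ℝ))

/-- A point set is in convex position if every point is a vertex of the convex hull. -/
def ConvexPos (P : Set (ℝ × ℝ)) : Prop :=
  ∀ p ∈ P, p ∉ convexHull ℝ (P \ {p})

/-- Vertices of the disjointness graph: unordered pairs of distinct points of `P`. -/
def SegOn (P : Set (ℝ × ℝ)) : Type :=
  {s : Sym2 (ℝ × ℝ) // (∀ p ∈ s, p ∈ P) ∧ ¬ s.IsDiag}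

/-- The disjointness graph of segments of `P`: segments adjacent iff disjoint. -/
noncomputable def DisjGraph (P : Set (ℝ × ℝ)) : SimpleGraph (SegOn P) where
  Adj a b := seg a.1 ∩ seg b.1 = ∅
  symm := ⟨fun a b (h : seg a.1 ∩ seg b.1 = ∅) => show seg b.1 ∩ seg a.1 = ∅ by rwa [Set.inter_comm]⟩
  loopless := ⟨fun a (h : seg a.1 ∩ seg a.1 = ∅) => by
    rw [Set.inter_self] at h
    exact (seg_nonempty a.1).ne_empty h⟩

/-- Two (unordered pairs of points seen as) segments cross if they intersect
but share no endpoint. -/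
def Crosses (s t : Sym2 (ℝ × ℝ)) : Prop :=
  (seg s ∩ seg t).Nonempty ∧ ∀ p, p ∈ s → p ∉ t

/-- A colour class is a star if no two of its segments cross. -/
def IsStarClass {P : Set (ℝ × ℝ)} {α : Type} (γ : (DisjGraph P).Coloring α) (c : α) : Prop :=
  ∀ s t : SegOn P, γ s = c → γ t = c → ¬ Crosses s.1 t.1

/-- `v` is an apex of the colour class `c`: every segment of the class is incident with `v`. -/
def IsApex {P : Set (ℝ × ℝ)} {α : Type} (γ : (DisjGraph P).Coloring α) (c : α) (v : ℝ × ℝ) : Prop :=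
  ∀ s : SegOn P, γ s = c → v ∈ s.1


theorem stmt0 (P : Finset (ℝ × ℝ)) (hcard : 3 ≤ P.card) (hgp : GenPos ↑P) :
    (DisjGraph ↑P).chromaticNumber ≤ ((P.card - 2 : ℕ) : ℕ∞) := by
  classical
  set n := P.card with hn
  -- index function
  obtain e := Fintype.equivFinOfCardEq (Fintype.card_coe P)
  set g : ℝ × ℝ → ℕ := fun p => if h : p ∈ P then (e ⟨p, h⟩ : ℕ) else 0 with hg
  have hglt : ∀ p ∈ P, g p < n := by
    intro p hp; simp only [hg, dif_pos hp]; exact (e ⟨p, hp⟩).2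
  have hginj : ∀ p ∈ P, ∀ q ∈ P, g p = g q → p = q := by
    intro p hp q hq h
    simp only [hg, dif_pos hp, dif_pos hq] at h
    have := e.injective (Fin.val_injective h)
    exact congrArg Subtype.val this
  -- minimum index of a pair
  set m : Sym2 (ℝ × ℝ) → ℕ :=
    Sym2.lift ⟨fun p q => min (g p) (g q), fun p q => min_comm _ _⟩ with hm
  have key : (DisjGraph ↑P).Colorable (n - 2) := by
    refine ⟨SimpleGraph.Coloring.mk
      (fun s => ⟨min (m s.1) (n - 3), by omega⟩) ?_⟩
    intro s t hadj heq
    obtain ⟨⟨a, b⟩, ha⟩ := Quot.exists_rep s.1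
    obtain ⟨⟨c, d⟩, hc⟩ := Quot.exists_rep t.1
    have hsa : s.1 = s(a, b) := ha.symm
    have htc : t.1 = s(c, d) := hc.symm
    have hmem := s.2.1
    have hmem' := t.2.1
    rw [hsa] at hmem; rw [htc] at hmem'
    have haP : a ∈ P := by simpa using hmem a (by simp)
    have hbP : b ∈ P := by simpa using hmem b (by simp)
    have hcP : c ∈ P := by simpa using hmem' c (by simp)
    have hdP : d ∈ P := by simpa using hmem' d (by simp)
    have hab : a ≠ b := by
      have := s.2.2; rw [hsa] at this; simpa [Sym2.mk_isDiag_iff] using this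
    have hcd : c ≠ d := by
      have := t.2.2; rw [htc] at this; simpa [Sym2.mk_isDiag_iff] using this
    have hms : m s.1 = min (g a) (g b) := by rw [hsa]; simp [hm]
    have hmt : m t.1 = min (g c) (g d) := by rw [htc]; simp [hm]
    have heq' : min (min (g a) (g b)) (n - 3) = min (min (g c) (g d)) (n - 3) := by
      have := congrArg Fin.val heq
      simpa [hms, hmt] using this
    have hgab : g a ≠ g b := fun h => hab (hginj a haP b hbP h)
    have hgcd : g c ≠ g d := fun h => hcd (hginj c hcP d hdP h)
    have h1 := hglt a haP; have h2 := hglt b hbP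
    have h3 := hglt c hcP; have h4 := hglt d hdP
    -- pigeonhole / min analysis: some endpoint shared
    have hshare : g a = g c ∨ g a = g d ∨ g b = g c ∨ g b = g d := by omega
    have hpt : ∃ p, p ∈ seg s.1 ∧ p ∈ seg t.1 := by
      have hsseg : seg s.1 = segment ℝ a b := by rw [hsa]; rfl
      have htseg : seg t.1 = segment ℝ c d := by rw [htc]; rfl
      rcases hshare with h | h | h | h
      · exact ⟨a, by rw [hsseg]; exact left_mem_segment ℝ a b,
          by rw [htseg, hginj a haP c hcP h]; exact left_mem_segment ℝ c d⟩
      · exact ⟨a, by rw [hsseg]; exact left_mem_segment ℝ a b,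
          by rw [htseg, hginj a haP d hdP h]; exact right_mem_segment ℝ c d⟩
      · exact ⟨b, by rw [hsseg]; exact right_mem_segment ℝ a b,
          by rw [htseg, hginj b hbP c hcP h]; exact left_mem_segment ℝ c d⟩
      · exact ⟨b, by rw [hsseg]; exact right_mem_segment ℝ a b,
          by rw [htseg, hginj b hbP d hdP h]; exact right_mem_segment ℝ c d⟩
    obtain ⟨p, hp1, hp2⟩ := hpt
    have : p ∈ seg s.1 ∩ seg t.1 := ⟨hp1, hp2⟩
    rw [hadj] at this
    exact this
  exact key.chromaticNumber_le
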